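/- arXiv:2311.01389 — 9 statements merged into one kernel-verified Lean document; each statement's English description precedes it below -/
import Mathlib

section
/- Let M be a semilattice over C in which a duple (s_L, s_R) of terms satisfies s_L ≰ s_R. Let K = {c ∈ C : c ≰ s_R in M}, and let φ be the atom with U(φ) = K. Then K is nonempty, φ discriminates (s_L, s_R), and φ is compatible with M: for every duple (r_L, r_R) discriminated by φ, r_L ≰ r_R in M. -/
/-!
Because `j t` is the join of the constants of `t`, a term `t` misses `K` exactly when
`j t ≤ j sR`. With `t = sL` this gives discrimination, with `t = sR` it gives `K ∩ sR = ∅`,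
and compatibility is transitivity: `rL` meets `K`, so `j rL ≰ j sR`, while `j rR ≤ j sR`.
-/

section

variable {C M : Type*} [Preorder M] {j : Set C → M} {t : Set C}

theorem le_iff_forall_singleton_le (hub : ∀ c ∈ t, j {c} ≤ j t)
    (hlub : ∀ x : M, (∀ c ∈ t, j {c} ≤ x) → j t ≤ x) {x : M} :
    j t ≤ x ↔ ∀ c ∈ t, j {c} ≤ x :=
  ⟨fun h c hc => (hub c hc).trans h, hlub x⟩

theorem setOf_not_singleton_le_inter_eq_empty_iff (hub : ∀ c ∈ t, j {c} ≤ j t)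
    (hlub : ∀ x : M, (∀ c ∈ t, j {c} ≤ x) → j t ≤ x) {x : M} :
    {c | ¬ j {c} ≤ x} ∩ t = ∅ ↔ j t ≤ x := by
  rw [le_iff_forall_singleton_le hub hlub, Set.eq_empty_iff_forall_notMem]
  simp only [Set.mem_inter_iff, Set.mem_ofPred_eq, not_and]
  exact forall_congr' fun c => not_imp_comm.trans (imp_congr_left not_not)

end

theorem stmt_7_general {C : Type*} {M : Type*} [SemilatticeSup M]
    (T : Set (Set C)) (j : Set C → M)
    (hub : ∀ t ∈ T, ∀ c ∈ t, j {c} ≤ j t)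
    (hlub : ∀ t ∈ T, ∀ x : M, (∀ c ∈ t, j {c} ≤ x) → j t ≤ x)
    (sL sR : Set C) (hsL : sL ∈ T) (hsR : sR ∈ T)
    (hneg : ¬ j sL ≤ j sR) :
    let K : Set C := {c | ¬ j {c} ≤ j sR}
    K.Nonempty ∧ (K ∩ sL).Nonempty ∧ K ∩ sR = ∅ ∧
      ∀ rL ∈ T, ∀ rR ∈ T, (K ∩ rL).Nonempty → K ∩ rR = ∅ → ¬ j rL ≤ j rR := by
  intro K
  have hK : ∀ t ∈ T, K ∩ t = ∅ ↔ j t ≤ j sR := fun t ht =>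
    setOf_not_singleton_le_inter_eq_empty_iff (hub t ht) (hlub t ht)
  have hKL : (K ∩ sL).Nonempty := Set.nonempty_iff_ne_empty.2 (mt (hK sL hsL).1 hneg)
  refine ⟨hKL.mono Set.inter_subset_left, hKL, (hK sR hsR).2 le_rfl, ?_⟩
  rintro rL hrL rR hrR hL hR hle
  exact Set.nonempty_iff_ne_empty.1 hL ((hK rL hrL).2 (hle.trans ((hK rR hrR).1 hR)))

/-- Existence of a compatible discriminating atom.  `M` is a join-semilattice
generated by constants `C`, with terms `T` (nonempty subsets of `C` whose joins
exist in `M`), where `j t` denotes the join in `M` of the constants of `t`,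
i.e. the least upper bound of `{j {c} : c ∈ t}`.  If a duple `(sL, sR)` of
terms satisfies `j sL ≰ j sR`, then `K = {c : j {c} ≰ j sR}` is nonempty, the
atom `φ :< K` discriminates `(sL, sR)`, and `φ` is compatible with `M`. -/
theorem stmt_7 {C : Type*} {M : Type*} [SemilatticeSup M]
    (T : Set (Set C)) (j : Set C → M)
    (hsingle : ∀ c : C, ({c} : Set C) ∈ T)
    (hub : ∀ t ∈ T, ∀ c ∈ t, j {c} ≤ j t)
    (hlub : ∀ t ∈ T, ∀ x : M, (∀ c ∈ t, j {c} ≤ x) → j t ≤ x)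
    (sL sR : Set C) (hsL : sL ∈ T) (hsR : sR ∈ T)
    (hneg : ¬ j sL ≤ j sR) :
    let K : Set C := {c | ¬ j {c} ≤ j sR}
    K.Nonempty ∧ (K ∩ sL).Nonempty ∧ K ∩ sR = ∅ ∧
      ∀ rL ∈ T, ∀ rR ∈ T, (K ∩ rL).Nonempty → K ∩ rR = ∅ → ¬ j rL ≤ j rR :=
  stmt_7_general T j hub hlub sL sR hsL hsR hneg
end

section
/- Every semilattice M generated by a set of constants C is atomizable: there exists a set A of atoms (nonempty subsets of C) such that for all terms s, t of M, s ≤ t in M if and only if every atom in A that meets C(s) also meets C(t). -/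
/-!
An element `x` of `M` gives the atom of all constants not below `x`. It meets a term `t`
exactly when the join of `t` is not below `x`; so `s ≤ t` forces every such atom meeting `s`
to meet `t`, and conversely the atom of `x = t` meets `s` whenever `s ≰ t`, but never `t`.
-/

namespace Atomization

variable {C M : Type*} [Preorder M]

def notBelow (g : C → M) (x : M) : Set C := {c | ¬ g c ≤ x}

def atoms (g : C → M) : Set (Set C) := {φ ∈ Set.range (notBelow g) | φ.Nonempty}

theorem notBelow_inter_nonempty_iff {g : C → M} {s : Set C} {a : M} (hs : IsLUB (g '' s) a)
    (x : M) : (notBelow g x ∩ s).Nonempty ↔ ¬ a ≤ x := by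
  rw [isLUB_le_iff hs, mem_upperBounds, Set.forall_mem_image]
  simp only [Set.Nonempty, Set.mem_inter_iff, notBelow, Set.mem_ofPred_eq, not_forall]
  exact exists_congr fun c => by tauto

theorem le_iff_forall_atoms {g : C → M} {s t : Set C} {a b : M}
    (hs : IsLUB (g '' s) a) (ht : IsLUB (g '' t) b) :
    a ≤ b ↔ ∀ φ ∈ atoms g, (φ ∩ s).Nonempty → (φ ∩ t).Nonempty := by
  constructor
  · rintro hab φ ⟨⟨x, rfl⟩, -⟩ hφs
    rw [notBelow_inter_nonempty_iff hs] at hφs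
    rw [notBelow_inter_nonempty_iff ht]
    exact fun hbx => hφs (hab.trans hbx)
  · intro h
    by_contra hab
    have hbs : (notBelow g b ∩ s).Nonempty := (notBelow_inter_nonempty_iff hs b).2 hab
    have hbt := h _ ⟨⟨b, rfl⟩, hbs.mono Set.inter_subset_left⟩ hbs
    exact (notBelow_inter_nonempty_iff ht b).1 hbt le_rfl

end Atomization

open Atomization in
theorem stmt_8_general {C : Type*} {M : Type*} [SemilatticeSup M]
    (T : Set (Set C)) (j : Set C → M)
    (hub : ∀ t ∈ T, ∀ c ∈ t, j {c} ≤ j t)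
    (hlub : ∀ t ∈ T, ∀ x : M, (∀ c ∈ t, j {c} ≤ x) → j t ≤ x) :
    ∃ A : Set (Set C), (∀ φ ∈ A, φ.Nonempty) ∧
      ∀ s ∈ T, ∀ t ∈ T,
        (j s ≤ j t ↔ ∀ φ ∈ A, (φ ∩ s).Nonempty → (φ ∩ t).Nonempty) := by
  have hIsLUB : ∀ t ∈ T, IsLUB ((fun c => j {c}) '' t) (j t) := fun t ht =>
    ⟨Set.forall_mem_image.2 (hub t ht),
      fun x hx => hlub t ht x (Set.forall_mem_image.1 hx)⟩
  exact ⟨atoms fun c => j {c}, fun φ hφ => hφ.2,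
    fun s hs t ht => le_iff_forall_atoms (hIsLUB s hs) (hIsLUB t ht)⟩

/-- Every semilattice generated by a set of constants `C` is atomizable: there
is a set `A` of atoms (nonempty subsets of `C`) such that for all terms `s, t`
of `M`, `j s ≤ j t` iff every atom of `A` meeting `s` also meets `t`.  Here `T`
is the set of terms (containing all singletons) and `j t` is the join in `M`
of the constants of `t` (its least upper bound). -/
theorem stmt_8 {C : Type*} {M : Type*} [SemilatticeSup M]
    (T : Set (Set C)) (j : Set C → M)
    (hsingle : ∀ c : C, ({c} : Set C) ∈ T)
    (hub : ∀ t ∈ T, ∀ c ∈ t, j {c} ≤ j t)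
    (hlub : ∀ t ∈ T, ∀ x : M, (∀ c ∈ t, j {c} ≤ x) → j t ≤ x) :
    ∃ A : Set (Set C), (∀ φ ∈ A, φ.Nonempty) ∧
      ∀ s ∈ T, ∀ t ∈ T,
        (j s ≤ j t ↔ ∀ φ ∈ A, (φ ∩ s).Nonempty → (φ ∩ t).Nonempty) :=
  stmt_8_general T j hub hlub
end

section
/- Full crossing produces a consistent model of the crossed duple: let M be atomized by A, let r = (r_L, r_R) be a duple with M ⊨ r⁻, let H = {φ ∈ A : φ < r_L and φ ≮ r_R} and B = {ψ ∈ A : ψ < r_R}. Then B is nonempty, no atom in (A \ H) ∪ (H ▽ B) discriminates r, and for every term t there is an atom of (A \ H) ∪ (H ▽ B) below t (where H ▽ B = {φ ▽ ψ : φ ∈ H, ψ ∈ B}). -/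
open Set

theorem stmt_9_general {C : Type*} (T : Set (Set C))
    (A : Set (Set C))
    (hAS6 : ∀ t ∈ T, ∃ φ ∈ A, (φ ∩ t).Nonempty)
    (rL rR : Set C) (hrR : rR ∈ T) :
    let H : Set (Set C) := {φ ∈ A | (φ ∩ rL).Nonempty ∧ φ ∩ rR = ∅}
    let B : Set (Set C) := {ψ ∈ A | (ψ ∩ rR).Nonempty}
    let A' : Set (Set C) := (A \ H) ∪ {χ | ∃ φ ∈ H, ∃ ψ ∈ B, χ = φ ∪ ψ}
    B.Nonempty ∧
      (∀ χ ∈ A', ¬ ((χ ∩ rL).Nonempty ∧ χ ∩ rR = ∅)) ∧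
      (∀ t ∈ T, ∃ χ ∈ A', (χ ∩ t).Nonempty) := by
  intro H B A'
  obtain ⟨ψ₀, hψ₀A, hψ₀R⟩ := hAS6 rR hrR
  refine ⟨⟨ψ₀, hψ₀A, hψ₀R⟩, ?_, ?_⟩
  · rintro χ (⟨hχA, hχH⟩ | ⟨φ, -, ψ, hψB, rfl⟩) ⟨hχL, hχR⟩
    · exact hχH ⟨hχA, hχL, hχR⟩
    · exact (hψB.2.mono (inter_subset_inter_left _ subset_union_right)).ne_empty hχR
  · intro t ht
    obtain ⟨φ, hφA, hφt⟩ := hAS6 t ht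
    by_cases hφH : φ ∈ H
    · exact ⟨φ ∪ ψ₀, Or.inr ⟨φ, hφH, ψ₀, ⟨hψ₀A, hψ₀R⟩, rfl⟩,
        hφt.mono (inter_subset_inter_left _ subset_union_left)⟩
    · exact ⟨φ, Or.inl ⟨hφA, hφH⟩, hφt⟩

/-- Full crossing produces a consistent model of the crossed duple.  `A`
atomizes the order `le` on the terms `T` of `M`, `A` satisfies AS6, the duple
`r = (rL, rR)` is negative in `M`, `H = dis_M(r)`, `B = L^a_M(rR)`.  Then `B`
is nonempty, no atom of `(A \ H) ∪ (H ▽ B)` discriminates `r`, and every term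
has an atom of `(A \ H) ∪ (H ▽ B)` below it. -/
theorem stmt_9 {C : Type*} (T : Set (Set C)) (le : Set C → Set C → Prop)
    (A : Set (Set C))
    (hAatom : ∀ s ∈ T, ∀ t ∈ T,
      (le s t ↔ ∀ φ ∈ A, (φ ∩ s).Nonempty → (φ ∩ t).Nonempty))
    (hAS6 : ∀ t ∈ T, ∃ φ ∈ A, (φ ∩ t).Nonempty)
    (rL rR : Set C) (hrL : rL ∈ T) (hrR : rR ∈ T) (hneg : ¬ le rL rR) :
    let H : Set (Set C) := {φ ∈ A | (φ ∩ rL).Nonempty ∧ φ ∩ rR = ∅}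
    let B : Set (Set C) := {ψ ∈ A | (ψ ∩ rR).Nonempty}
    let A' : Set (Set C) := (A \ H) ∪ {χ | ∃ φ ∈ H, ∃ ψ ∈ B, χ = φ ∪ ψ}
    B.Nonempty ∧
      (∀ χ ∈ A', ¬ ((χ ∩ rL).Nonempty ∧ χ ∩ rR = ∅)) ∧
      (∀ t ∈ T, ∃ χ ∈ A', (χ ∩ t).Nonempty) :=
  stmt_9_general T A hAS6 rL rR hrR
end

section
/- Logical consequences of full crossing: let M be a semilattice atomized by A, let r = (r_L, r_R) be a duple, and let □_r M be the semilattice atomized by (A \ H) ∪ (H ▽ B) with H = dis_M(r) and B = L^a_M(r_R). If a duple s = (s_L, s_R) satisfies M ⊨ s⁻ and □_r M ⊨ s⁺, then in M both s_L ≤ s_R ⊔ r_L and r_R ≤ s_R hold. -/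
/-!
An atom of `A` below `sL` but not below `sR` witnesses `M ⊨ s⁻`. It cannot survive in
`□_r M`, so it lies in `H = dis_M(r)`; joining it with any atom `ψ` below `rR` gives an atom
of `□_r M` below `sL`, which must be below `sR`, and since the witness is not, `ψ` is.
The atoms of `A` outside `H` are atoms of `□_r M`, hence below `sR` when they are below `sL`,
while those in `H` are below `rL`.
-/

section AtomizedSemilattice

variable {C : Type*}

/-- `s ≤ t` in the model atomized by `A`: every atom below `s` is below `t`. -/
def AtomsLE (A : Set (Set C)) (s t : Set C) : Prop :=
  ∀ φ ∈ A, (φ ∩ s).Nonempty → (φ ∩ t).Nonempty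

/-- The atoms `φ ▽ ψ` for `φ ∈ H`, `ψ ∈ B`. -/
def atomJoins (H B : Set (Set C)) : Set (Set C) :=
  {χ | ∃ φ ∈ H, ∃ ψ ∈ B, χ = φ ∪ ψ}

variable {A A' H B : Set (Set C)} {s t u : Set C}

theorem AtomsLE.mono (h : A ⊆ A') (hA' : AtomsLE A' s t) : AtomsLE A s t :=
  fun φ hφ => hA' φ (h hφ)

theorem AtomsLE.union_of_diff (hpos : AtomsLE (A \ H) s t)
    (hH : ∀ φ ∈ H, (φ ∩ u).Nonempty) : AtomsLE A s (t ∪ u) := by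
  intro φ hφ hφs
  by_cases hφH : φ ∈ H
  · exact (hH φ hφH).mono (Set.inter_subset_inter_right _ Set.subset_union_right)
  · exact (hpos φ ⟨hφ, hφH⟩ hφs).mono (Set.inter_subset_inter_right _ Set.subset_union_left)

theorem exists_mem_of_not_atomsLE (hneg : ¬ AtomsLE A s t) (hpos : AtomsLE (A \ H) s t) :
    ∃ φ ∈ H, (φ ∩ s).Nonempty ∧ φ ∩ t = ∅ := by
  simp only [AtomsLE, not_forall, Set.not_nonempty_iff_eq_empty, exists_prop] at hneg
  obtain ⟨φ, hφA, hφs, hφt⟩ := hneg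
  by_cases hφH : φ ∈ H
  · exact ⟨φ, hφH, hφs, hφt⟩
  · exact absurd (hφt ▸ hpos φ ⟨hφA, hφH⟩ hφs) Set.not_nonempty_empty

theorem inter_nonempty_of_atomsLE_atomJoins (hpos : AtomsLE (atomJoins H B) s t)
    {φ : Set C} (hφH : φ ∈ H) (hφs : (φ ∩ s).Nonempty) (hφt : φ ∩ t = ∅) :
    ∀ ψ ∈ B, (ψ ∩ t).Nonempty := by
  intro ψ hψ
  have hjoin := hpos (φ ∪ ψ) ⟨φ, hφH, ψ, hψ, rfl⟩
    (hφs.mono (Set.inter_subset_inter_left _ Set.subset_union_left))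
  rwa [Set.union_inter_distrib_right, hφt, Set.empty_union] at hjoin

end AtomizedSemilattice

/-- Logical consequences of full crossing.  Writing `pos A s t` for "every atom
of `A` below `s` is below `t`" (the order of the model atomized by `A`), if a
duple `s = (sL, sR)` is negative in `M` (atomized by `A`) and positive in
`□_r M` (atomized by `(A \ H) ∪ (H ▽ B)`), then in `M` both
`sL ≤ sR ⊔ rL` and `rR ≤ sR` hold. -/
theorem stmt_10 {C : Type*} (A : Set (Set C)) (rL rR sL sR : Set C) :
    let pos : Set (Set C) → Set C → Set C → Prop :=
      fun B s t => ∀ φ ∈ B, (φ ∩ s).Nonempty → (φ ∩ t).Nonempty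
    let H : Set (Set C) := {φ ∈ A | (φ ∩ rL).Nonempty ∧ φ ∩ rR = ∅}
    let B : Set (Set C) := {ψ ∈ A | (ψ ∩ rR).Nonempty}
    let A' : Set (Set C) := (A \ H) ∪ {χ | ∃ φ ∈ H, ∃ ψ ∈ B, χ = φ ∪ ψ}
    ¬ pos A sL sR → pos A' sL sR →
      pos A sL (sR ∪ rL) ∧ pos A rR sR := by
  intro pos H B A' hneg hpos
  have hpos_diff : AtomsLE (A \ H) sL sR :=
    AtomsLE.mono Set.subset_union_left hpos
  have hpos_joins : AtomsLE (atomJoins H B) sL sR :=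
    AtomsLE.mono Set.subset_union_right hpos
  refine ⟨hpos_diff.union_of_diff fun φ hφ => hφ.2.1, ?_⟩
  obtain ⟨φ, hφH, hφs, hφt⟩ := exists_mem_of_not_atomsLE hneg hpos_diff
  exact fun ψ hψ hψr => inter_nonempty_of_atomsLE_atomJoins hpos_joins hφH hφs hφt ψ ⟨hψ, hψr⟩
end

section
/- Full crossing yields the freest model: with notation as above, □_r M is the freest semilattice with the same terms as M that models Th₀⁺(M) ∪ {r⁺}; that is, □_r M ⊨ Th₀⁺(M) ∪ {r⁺}, and for any duple s with □_r M ⊨ s⁺, s⁺ follows from Th₀⁺(M) together with r⁺ (specifically, M ⊨ s_L ≤ s_R ⊔ r_L and M ⊨ r_R ≤ s_R, so s⁺ holds in any model of Th₀⁺(M) ∪ {r⁺}). -/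
/-!
Let `s ≤ t` hold in the crossed model. An atom `φ` of `A` that separates it must be a
discriminant of `r`: otherwise it is still an atom there. If there is none, `s ≤ t` already holds
in `M`. If there is one, `φ₀`, then `M ⊨ s ≤ t ⊔ rL` (the discriminants lie below `rL`) and
`M ⊨ rR ≤ t` (each atom `ψ` below `rR` yields the atom `φ₀ ∪ ψ` below `s`, which must meet `t`
through `ψ`), so `s ≤ t ⊔ rL ≤ t ⊔ rR ≤ t` in every model of `Th₀⁺(M) ∪ {r⁺}`.
-/

namespace FullCrossing

variable {C : Type*}

/-- `s ≤ t` holds in the model atomized by `B`. -/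
def Positive (B : Set (Set C)) (s t : Set C) : Prop :=
  ∀ φ ∈ B, (φ ∩ s).Nonempty → (φ ∩ t).Nonempty

/-- `dis(r)`. -/
def discriminants (A : Set (Set C)) (rL rR : Set C) : Set (Set C) :=
  {φ ∈ A | (φ ∩ rL).Nonempty ∧ φ ∩ rR = ∅}

/-- `L^a(rR)`. -/
def lowerAtoms (A : Set (Set C)) (rR : Set C) : Set (Set C) :=
  {ψ ∈ A | (ψ ∩ rR).Nonempty}

/-- The atoms of `□_r M`: `(A \ dis(r)) ∪ (dis(r) ▽ L^a(rR))`. -/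
def crossing (A : Set (Set C)) (rL rR : Set C) : Set (Set C) :=
  (A \ discriminants A rL rR) ∪
    {χ | ∃ φ ∈ discriminants A rL rR, ∃ ψ ∈ lowerAtoms A rR, χ = φ ∪ ψ}

variable {A : Set (Set C)} {rL rR s t : Set C}

theorem positive_crossing (A : Set (Set C)) (rL rR : Set C) :
    Positive (crossing A rL rR) rL rR := by
  rintro χ (⟨hχA, hχ⟩ | ⟨φ, -, ψ, ⟨-, x, hxψ, hxR⟩, rfl⟩) hχL
  · by_contra hχR
    exact hχ ⟨hχA, hχL, Set.not_nonempty_iff_eq_empty.mp hχR⟩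
  · exact ⟨x, Or.inr hxψ, hxR⟩

theorem positive_crossing_of_positive (h : Positive A s t) : Positive (crossing A rL rR) s t := by
  rintro χ (⟨hχA, -⟩ | ⟨φ, ⟨hφA, -⟩, ψ, ⟨hψA, -⟩, rfl⟩) ⟨x, hxχ, hxs⟩
  · exact h χ hχA ⟨x, hxχ, hxs⟩
  · rcases hxχ with hxφ | hxψ
    · obtain ⟨y, hyφ, hyt⟩ := h φ hφA ⟨x, hxφ, hxs⟩
      exact ⟨y, Or.inl hyφ, hyt⟩
    · obtain ⟨y, hyψ, hyt⟩ := h ψ hψA ⟨x, hxψ, hxs⟩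
      exact ⟨y, Or.inr hyψ, hyt⟩

theorem Positive.union_left_of_crossing (h : Positive (crossing A rL rR) s t) :
    Positive A s (t ∪ rL) := by
  intro φ hφA hφs
  by_cases hφ : φ ∈ discriminants A rL rR
  · exact hφ.2.1.mono (Set.inter_subset_inter_right φ Set.subset_union_right)
  · exact (h φ (Or.inl ⟨hφA, hφ⟩) hφs).mono
      (Set.inter_subset_inter_right φ Set.subset_union_left)

theorem Positive.of_crossing_of_not (h : Positive (crossing A rL rR) s t)
    (hn : ¬Positive A s t) : Positive A rR t := by
  simp only [Positive, not_forall, Set.not_nonempty_iff_eq_empty] at hn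
  obtain ⟨φ, hφA, hφs, hφt⟩ := hn
  have hφ : φ ∈ discriminants A rL rR := by
    by_contra hφ
    simpa [hφt] using h φ (Or.inl ⟨hφA, hφ⟩) hφs
  intro ψ hψA hψR
  obtain ⟨x, hxχ | hxψ, hxt⟩ :=
    h (φ ∪ ψ) (Or.inr ⟨φ, hφ, ψ, ⟨hψA, hψR⟩, rfl⟩)
      (hφs.mono (Set.inter_subset_inter_left s Set.subset_union_left))
  · exact (Set.eq_empty_iff_forall_notMem.mp hφt x ⟨hxχ, hxt⟩).elim
  · exact ⟨x, hxψ, hxt⟩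

theorem le_of_le_union_of_le {le : Set C → Set C → Prop} (hrefl : ∀ a, le a a)
    (htrans : ∀ a b c, le a b → le b c → le a c)
    (hunion : ∀ a b a' b', le a b → le a' b' → le (a ∪ a') (b ∪ b'))
    (hs : le s (t ∪ rL)) (hr : le rL rR) (ht : le rR t) : le s t := by
  have h := hunion _ _ _ _ (hrefl t) (htrans _ _ _ hr ht)
  rw [Set.union_self] at h
  exact htrans _ _ _ hs h

end FullCrossing

open FullCrossing in
/-- Full crossing yields the freest model of `Th₀⁺(M) ∪ {r⁺}`: with
`pos B s t` meaning "every atom of `B` below `s` is below `t`", the model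
atomized by `A' = (A \ dis(r)) ∪ (dis(r) ▽ L^a(rR))` (i) satisfies `r⁺`,
(ii) satisfies every positive duple of `M`, and (iii) every duple positive in
`□_r M` holds in any semilattice-like order `le` on terms which models
`Th₀⁺(M)` together with `r⁺`. -/
theorem stmt_11 {C : Type*} (A : Set (Set C)) (rL rR : Set C) :
    let pos : Set (Set C) → Set C → Set C → Prop :=
      fun B s t => ∀ φ ∈ B, (φ ∩ s).Nonempty → (φ ∩ t).Nonempty
    let H : Set (Set C) := {φ ∈ A | (φ ∩ rL).Nonempty ∧ φ ∩ rR = ∅}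
    let B : Set (Set C) := {ψ ∈ A | (ψ ∩ rR).Nonempty}
    let A' : Set (Set C) := (A \ H) ∪ {χ | ∃ φ ∈ H, ∃ ψ ∈ B, χ = φ ∪ ψ}
    pos A' rL rR ∧
      (∀ a b : Set C, pos A a b → pos A' a b) ∧
      (∀ le : Set C → Set C → Prop,
        (∀ a : Set C, le a a) →
        (∀ a b c : Set C, le a b → le b c → le a c) →
        (∀ a b a' b' : Set C, le a b → le a' b' → le (a ∪ a') (b ∪ b')) →
        (∀ a b : Set C, pos A a b → le a b) →
        le rL rR →
        ∀ sL sR : Set C, pos A' sL sR → le sL sR) := by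
  intro pos H B A'
  refine ⟨positive_crossing A rL rR, fun _ _ => positive_crossing_of_positive, ?_⟩
  intro le hrefl htrans hunion hA hr sL sR (hs : Positive (crossing A rL rR) sL sR)
  by_cases hM : Positive A sL sR
  · exact hA sL sR hM
  · exact le_of_le_union_of_le hrefl htrans hunion (hA _ _ hs.union_left_of_crossing) hr
      (hA _ _ (hs.of_crossing_of_not hM))
end

section
/- Removability criterion for atoms: let M be an atomized semilattice over C with terms T atomized by A, and φ an atom. Then A \ {φ} and A ∪ {φ} both atomize M if and only if for every constant c ∈ U(φ) and every term t ∈ T with C(t) ⊆ C \ U(φ), there is an atom ψ ∈ A with ψ ≠ φ, ψ < c, and ψ ≮ t. -/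
/-!
Write `Q`, `P` and `M` for "`s ≤ t` in the order atomized by `A \ {φ}`, by `{φ}` and by `A`". Since
`A \ {φ} ⊆ A ⊆ (A \ {φ}) ∪ {φ}`, we have `Q ∧ P → M → Q`, and `A ∪ {φ}` atomizes the order `M ∧ P`.
Hence both `A \ {φ}` and `A ∪ {φ}` atomize `M` exactly when `Q → P` on terms. Testing `Q → P` on
`s = {c}` with `c ∈ φ` and `t` disjoint from `φ` gives the atom `ψ ≠ φ` containing `c` but missing `t`;
conversely such atoms witness `¬ Q` whenever `P` fails.
-/

namespace Atomization

variable {C : Type*}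

/-- The order atomized by `B`; an atom `χ` lies below a term `s` iff `χ ∩ s` is nonempty. -/
def AtomLE (B : Set (Set C)) (s t : Set C) : Prop :=
  ∀ χ ∈ B, (χ ∩ s).Nonempty → (χ ∩ t).Nonempty

theorem AtomLE.anti {B B' : Set (Set C)} {s t : Set C} (hB : B' ⊆ B) (h : AtomLE B s t) :
    AtomLE B' s t :=
  fun χ hχ => h χ (hB hχ)

theorem atomLE_union_iff {B B' : Set (Set C)} {s t : Set C} :
    AtomLE (B ∪ B') s t ↔ AtomLE B s t ∧ AtomLE B' s t := by
  simp only [AtomLE, Set.mem_union, or_imp, forall_and]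

theorem atomLE_iff_sdiff_and_atomLE_iff_union_iff {A : Set (Set C)} {φ s t : Set C} :
    ((AtomLE A s t ↔ AtomLE (A \ {φ}) s t) ∧ (AtomLE A s t ↔ AtomLE (A ∪ {φ}) s t)) ↔
      (AtomLE (A \ {φ}) s t → AtomLE {φ} s t) := by
  have hMQ : AtomLE A s t → AtomLE (A \ {φ}) s t := AtomLE.anti Set.sdiff_subset
  have hQPM : AtomLE (A \ {φ}) s t → AtomLE {φ} s t → AtomLE A s t := fun hQ hP =>
    AtomLE.anti (Set.subset_sdiff_union A {φ}) (atomLE_union_iff.mpr ⟨hQ, hP⟩)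
  have hU : AtomLE (A ∪ {φ}) s t ↔ AtomLE A s t ∧ AtomLE {φ} s t := atomLE_union_iff
  rw [hU]
  tauto

theorem forall_atomLE_iff_sdiff_and_union_iff {T : Set (Set C)} {A : Set (Set C)} {φ : Set C} :
    ((∀ s ∈ T, ∀ t ∈ T, (AtomLE A s t ↔ AtomLE (A \ {φ}) s t)) ∧
      (∀ s ∈ T, ∀ t ∈ T, (AtomLE A s t ↔ AtomLE (A ∪ {φ}) s t))) ↔
      ∀ s ∈ T, ∀ t ∈ T, AtomLE (A \ {φ}) s t → AtomLE {φ} s t := by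
  constructor
  · rintro ⟨hsdiff, hunion⟩ s hs t ht
    exact atomLE_iff_sdiff_and_atomLE_iff_union_iff.mp ⟨hsdiff s hs t ht, hunion s hs t ht⟩
  · intro h
    exact ⟨fun s hs t ht => (atomLE_iff_sdiff_and_atomLE_iff_union_iff.mpr (h s hs t ht)).1,
      fun s hs t ht => (atomLE_iff_sdiff_and_atomLE_iff_union_iff.mpr (h s hs t ht)).2⟩

theorem forall_atomLE_sdiff_imp_iff {T : Set (Set C)} (hT : ∀ c : C, ({c} : Set C) ∈ T)
    {A : Set (Set C)} {φ : Set C} :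
    (∀ s ∈ T, ∀ t ∈ T, AtomLE (A \ {φ}) s t → AtomLE {φ} s t) ↔
      ∀ c ∈ φ, ∀ t ∈ T, t ∩ φ = ∅ → ∃ ψ ∈ A, ψ ≠ φ ∧ c ∈ ψ ∧ ψ ∩ t = ∅ := by
  constructor
  · intro h c hc t ht htφ
    by_contra! hno
    have hQ : AtomLE (A \ {φ}) {c} t := fun χ ⟨hχA, hχφ⟩ hχc =>
      hno χ hχA hχφ (Set.inter_singleton_nonempty.mp hχc)
    obtain ⟨x, hxφ, hxt⟩ := h {c} (hT c) t ht hQ φ rfl (Set.inter_singleton_nonempty.mpr hc)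
    exact htφ.subset ⟨hxt, hxφ⟩
  · rintro h s - t ht hQ _ rfl ⟨c, hcφ, hcs⟩
    by_contra hφt
    obtain ⟨ψ, hψA, hψφ, hcψ, hψt⟩ :=
      h c hcφ t ht (by rw [Set.inter_comm]; exact Set.not_nonempty_iff_eq_empty.mp hφt)
    obtain ⟨x, hx⟩ := hQ ψ ⟨hψA, hψφ⟩ ⟨c, hcψ, hcs⟩
    exact hψt.subset hx

end Atomization

open Atomization in
theorem stmt_15_general {C : Type*} (T : Set (Set C))
    (hTsingle : ∀ c : C, ({c} : Set C) ∈ T)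
    (A : Set (Set C))
    (φ : Set C) :
    let pos : Set (Set C) → Set C → Set C → Prop :=
      fun B s t => ∀ χ ∈ B, (χ ∩ s).Nonempty → (χ ∩ t).Nonempty
    ((∀ s ∈ T, ∀ t ∈ T, (pos A s t ↔ pos (A \ {φ}) s t)) ∧
     (∀ s ∈ T, ∀ t ∈ T, (pos A s t ↔ pos (A ∪ {φ}) s t))) ↔
      ∀ c ∈ φ, ∀ t ∈ T, t ∩ φ = ∅ →
        ∃ ψ ∈ A, ψ ≠ φ ∧ c ∈ ψ ∧ ψ ∩ t = ∅ := by
  exact forall_atomLE_iff_sdiff_and_union_iff.trans (forall_atomLE_sdiff_imp_iff hTsingle)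

/-- Removability criterion for atoms: if `M` is atomized by `A` over constants
`C` with terms `T`, then `A \ {φ}` and `A ∪ {φ}` both atomize `M` iff for every
constant `c ∈ U(φ)` and every term `t ∈ T` with `C(t) ⊆ C \ U(φ)` there is an
atom `ψ ∈ A` with `ψ ≠ φ`, `ψ < c` and `ψ ≮ t`. -/
theorem stmt_15 {C : Type*} (T : Set (Set C))
    (hTsingle : ∀ c : C, ({c} : Set C) ∈ T)
    (hTunion : ∀ s ∈ T, ∀ t ∈ T, s ∪ t ∈ T)
    (A : Set (Set C)) (hA : ∀ ψ ∈ A, ψ.Nonempty)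
    (φ : Set C) (hφ : φ.Nonempty) :
    let pos : Set (Set C) → Set C → Set C → Prop :=
      fun B s t => ∀ χ ∈ B, (χ ∩ s).Nonempty → (χ ∩ t).Nonempty
    ((∀ s ∈ T, ∀ t ∈ T, (pos A s t ↔ pos (A \ {φ}) s t)) ∧
     (∀ s ∈ T, ∀ t ∈ T, (pos A s t ↔ pos (A ∪ {φ}) s t))) ↔
      ∀ c ∈ φ, ∀ t ∈ T, t ∩ φ = ∅ →
        ∃ ψ ∈ A, ψ ≠ φ ∧ c ∈ ψ ∧ ψ ∩ t = ∅ :=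
  stmt_15_general T hTsingle A φ
end

section
/- If a semilattice M can be atomized by a set A of atoms all of whose upper constant segments are finite, then M is atomized by the set of its non-redundant atoms; in particular, every atom of A is a join of atoms non-redundant with M. -/
/-!
A redundant finite atom is the union of strictly smaller compatible atoms, so induction on
cardinality writes every finite compatible atom as a union of non-redundant ones. Each atom of `A`
is therefore such a union, and an atom of `A` meeting `s` meets `t` as soon as every non-redundant
atom does; conversely a compatible atom can never meet `s` and miss `t` when `s ≤ t`.
-/

open Set

section Redundancy

variable {α : Type*} (P : Set α → Prop)

def IsRedundant (χ : Set α) : Prop :=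
  P χ ∧ ∃ S : Set (Set α), (∀ ψ ∈ S, P ψ) ∧ χ ∉ S ∧ χ = ⋃₀ S

def nonRedundant : Set (Set α) := {χ | P χ ∧ ¬ IsRedundant P χ}

variable {P}

theorem Set.Finite.exists_subset_nonRedundant_sUnion_eq {χ : Set α} (hfin : χ.Finite)
    (hP : P χ) : ∃ S ⊆ nonRedundant P, χ = ⋃₀ S := by
  induction hn : χ.ncard using Nat.strong_induction_on generalizing χ with
  | _ n ih =>
  by_cases hχ : IsRedundant P χ
  · obtain ⟨-, S₀, hS₀, hχS₀, rfl⟩ := hχ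
    have hdecomp : ∀ ψ ∈ S₀, ∃ S ⊆ nonRedundant P, ψ = ⋃₀ S := fun ψ hψ => by
      have hlt : ψ ⊂ ⋃₀ S₀ :=
        (subset_sUnion_of_mem hψ).ssubset_of_ne (ne_of_mem_of_not_mem hψ hχS₀)
      exact ih _ (hn ▸ ncard_lt_ncard hlt hfin) (hfin.subset hlt.subset) (hS₀ ψ hψ) rfl
    choose! f hfP hf using hdecomp
    refine ⟨⋃ ψ ∈ S₀, f ψ, iUnion₂_subset hfP, ?_⟩
    rw [sUnion_iUnion, sUnion_eq_biUnion]
    simp only [sUnion_iUnion]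
    exact iUnion₂_congr hf
  · exact ⟨{χ}, singleton_subset_iff.2 ⟨hP, hχ⟩, (sUnion_singleton χ).symm⟩

end Redundancy

section Atomization

variable {C : Type*} (T : Set (Set C)) (le : Set C → Set C → Prop)

def Atomizes (A : Set (Set C)) : Prop :=
  ∀ s ∈ T, ∀ t ∈ T, (le s t ↔ ∀ φ ∈ A, (φ ∩ s).Nonempty → (φ ∩ t).Nonempty)

def IsCompatible (χ : Set C) : Prop :=
  χ.Nonempty ∧ ∀ s ∈ T, ∀ t ∈ T, (χ ∩ s).Nonempty → χ ∩ t = ∅ → ¬ le s t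

variable {T le}

theorem Atomizes.isCompatible {A : Set (Set C)} (hA : Atomizes T le A) {φ : Set C} (hφ : φ ∈ A)
    (hne : φ.Nonempty) : IsCompatible T le φ :=
  ⟨hne, fun s hs t ht hφs hφt hst => by
    simpa [hφt] using (hA s hs t ht).1 hst φ hφ hφs⟩

theorem Atomizes.of_forall_eq_sUnion {A B : Set (Set C)} (hA : Atomizes T le A)
    (hB : ∀ χ ∈ B, IsCompatible T le χ) (hAB : ∀ φ ∈ A, ∃ S ⊆ B, φ = ⋃₀ S) :
    Atomizes T le B := by
  intro s hs t ht
  refine ⟨fun hst χ hχ hχs => ?_, fun h => (hA s hs t ht).2 fun φ hφ hφs => ?_⟩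
  · by_contra hχt
    exact (hB χ hχ).2 s hs t ht hχs (not_nonempty_iff_eq_empty.1 hχt) hst
  · obtain ⟨S, hSB, rfl⟩ := hAB φ hφ
    obtain ⟨c, ⟨ψ, hψS, hcψ⟩, hcs⟩ := hφs
    obtain ⟨d, hdψ, hdt⟩ := h ψ (hSB hψS) ⟨c, hcψ, hcs⟩
    exact ⟨d, ⟨ψ, hψS, hdψ⟩, hdt⟩

end Atomization

theorem stmt_17_general {C : Type*} (T : Set (Set C)) (le : Set C → Set C → Prop)
    (A : Set (Set C)) (hAfin : ∀ φ ∈ A, φ.Finite)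
    (hAatom : ∀ s ∈ T, ∀ t ∈ T,
      (le s t ↔ ∀ φ ∈ A, (φ ∩ s).Nonempty → (φ ∩ t).Nonempty)) :
    let compatible : Set C → Prop := fun χ => χ.Nonempty ∧
      ∀ s ∈ T, ∀ t ∈ T, (χ ∩ s).Nonempty → χ ∩ t = ∅ → ¬ le s t
    let redundant : Set C → Prop := fun χ => compatible χ ∧
      ∃ S : Set (Set C), (∀ ψ ∈ S, compatible ψ) ∧ χ ∉ S ∧ χ = ⋃₀ S
    let NR : Set (Set C) := {χ | compatible χ ∧ ¬ redundant χ}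
    (∀ s ∈ T, ∀ t ∈ T,
        (le s t ↔ ∀ φ ∈ NR, (φ ∩ s).Nonempty → (φ ∩ t).Nonempty)) ∧
      ∀ φ ∈ A, ∃ S ⊆ NR, φ = ⋃₀ S := by
  intro _ _ NR
  have hA : Atomizes T le A := hAatom
  have hdecomp : ∀ φ ∈ A, ∃ S ⊆ NR, φ = ⋃₀ S := fun φ hφ => by
    rcases φ.eq_empty_or_nonempty with rfl | hne
    · exact ⟨∅, empty_subset _, sUnion_empty.symm⟩
    · exact (hAfin φ hφ).exists_subset_nonRedundant_sUnion_eq (hA.isCompatible hφ hne)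
  exact ⟨hA.of_forall_eq_sUnion (fun _ hχ => hχ.1) hdecomp, hdecomp⟩

/-- If a semilattice `M` (order `le` on terms `T`) can be atomized by a set `A`
of atoms all of whose upper constant segments are finite, then `M` is atomized
by its non-redundant atoms; in particular every atom of `A` is a join (union)
of atoms non-redundant with `M`. -/
theorem stmt_17 {C : Type*} (T : Set (Set C)) (le : Set C → Set C → Prop)
    (A : Set (Set C)) (hAfin : ∀ φ ∈ A, φ.Finite) (hAne : ∀ φ ∈ A, φ.Nonempty)
    (hAatom : ∀ s ∈ T, ∀ t ∈ T,
      (le s t ↔ ∀ φ ∈ A, (φ ∩ s).Nonempty → (φ ∩ t).Nonempty)) :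
    let compatible : Set C → Prop := fun χ => χ.Nonempty ∧
      ∀ s ∈ T, ∀ t ∈ T, (χ ∩ s).Nonempty → χ ∩ t = ∅ → ¬ le s t
    let redundant : Set C → Prop := fun χ => compatible χ ∧
      ∃ S : Set (Set C), (∀ ψ ∈ S, compatible ψ) ∧ χ ∉ S ∧ χ = ⋃₀ S
    let NR : Set (Set C) := {χ | compatible χ ∧ ¬ redundant χ}
    (∀ s ∈ T, ∀ t ∈ T,
        (le s t ↔ ∀ φ ∈ NR, (φ ∩ s).Nonempty → (φ ∩ t).Nonempty)) ∧
      ∀ φ ∈ A, ∃ S ⊆ NR, φ = ⋃₀ S :=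
  stmt_17_general T le A hAfin hAatom
end

section
/- Limit atoms in finitely generated semilattices: let M be a finitely generated atomized semilattice over an infinite constant set C (all terms finite subsets of C), and let φ₀ < φ₁ < φ₂ < ⋯ be a strictly ascending chain of compatible atoms (so U(φ₀) ⊋ U(φ₁) ⊋ ⋯). If U = ⋂_{i≥0} U(φᵢ) is nonempty, then the atom ψ with U(ψ) = U is compatible with M: every duple (s, t) of finite terms discriminated by ψ is also discriminated by some φⱼ. -/
open Filter Set

theorem Antitone.exists_inter_eq_empty_of_iInter_inter_eq_empty {α ι : Type*} [Preorder ι]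
    [IsDirected ι (· ≤ ·)] [Nonempty ι] {φ : ι → Set α} (hφ : Antitone φ) {t : Set α}
    (ht : t.Finite) (h : (⋂ i, φ i) ∩ t = ∅) : ∃ i, φ i ∩ t = ∅ := by
  have hleaves : ∀ x ∈ t, ∀ᶠ i in atTop, x ∉ φ i := by
    intro x hx
    obtain ⟨i, hi⟩ : ∃ i, x ∉ φ i := by
      by_contra! hall
      exact (h ▸ ⟨mem_iInter.2 hall, hx⟩ : x ∈ (∅ : Set α))
    exact eventually_atTop.2 ⟨i, fun j hij hj => hi (hφ hij hj)⟩
  obtain ⟨i, hi⟩ := ((eventually_all_finite ht).2 hleaves).exists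
  exact ⟨i, eq_empty_of_forall_notMem fun x hx => hi x hx.2 hx.1⟩

theorem stmt_18_general {C : Type*} (le : Set C → Set C → Prop)
    (φ : ℕ → Set C) (hchain : ∀ i, φ (i + 1) ⊂ φ i)
    (hcompat : ∀ i, (φ i).Nonempty ∧
      ∀ s t : Set C, s.Finite → s.Nonempty → t.Finite → t.Nonempty →
        (φ i ∩ s).Nonempty → φ i ∩ t = ∅ → ¬ le s t) :
    ∀ s t : Set C, s.Finite → s.Nonempty → t.Finite → t.Nonempty →
      ((⋂ i, φ i) ∩ s).Nonempty → (⋂ i, φ i) ∩ t = ∅ →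
        (∃ j, (φ j ∩ s).Nonempty ∧ φ j ∩ t = ∅) ∧ ¬ le s t := by
  intro s t hsf hsn htf htn ⟨x, hxU, hxs⟩ hUt
  have hanti : Antitone φ := antitone_nat_of_succ_le fun i => (hchain i).subset
  obtain ⟨j, hjt⟩ := hanti.exists_inter_eq_empty_of_iInter_inter_eq_empty htf hUt
  have hjs : (φ j ∩ s).Nonempty := ⟨x, mem_iInter.1 hxU j, hxs⟩
  exact ⟨⟨j, hjs, hjt⟩, (hcompat j).2 s t hsf hsn htf htn hjs hjt⟩

/-- Limit atoms in finitely generated semilattices: `M` is a semilattice over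
an infinite constant set `C` whose terms are the finite nonempty subsets of
`C`, with order `le`; `φ₀ < φ₁ < ⋯` is a strictly ascending chain of atoms
compatible with `M` (so `U(φ₀) ⊋ U(φ₁) ⊋ ⋯`).  If `U = ⋂ᵢ U(φᵢ)` is nonempty,
then the limit atom `ψ :< U` is compatible with `M`: every duple of finite
terms discriminated by `ψ` is discriminated by some `φⱼ`, hence negative. -/
theorem stmt_18 {C : Type*} [Infinite C] (le : Set C → Set C → Prop)
    (φ : ℕ → Set C) (hchain : ∀ i, φ (i + 1) ⊂ φ i)
    (hcompat : ∀ i, (φ i).Nonempty ∧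
      ∀ s t : Set C, s.Finite → s.Nonempty → t.Finite → t.Nonempty →
        (φ i ∩ s).Nonempty → φ i ∩ t = ∅ → ¬ le s t)
    (hU : (⋂ i, φ i).Nonempty) :
    ∀ s t : Set C, s.Finite → s.Nonempty → t.Finite → t.Nonempty →
      ((⋂ i, φ i) ∩ s).Nonempty → (⋂ i, φ i) ∩ t = ∅ →
        (∃ j, (φ j ∩ s).Nonempty ∧ φ j ∩ t = ∅) ∧ ¬ le s t :=
  stmt_18_general le φ hchain hcompat
end

section
/- In a finitely generated semilattice over an infinite set of constants, every redundant atom is equal to a union of atoms non-redundant with the semilattice; equivalently, the non-redundant atoms of S atomize S. -/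
/-!
Fix a point `x` of a compatible atom `φ`. By Zorn's lemma there is a minimal compatible atom
`ψ ⊆ φ` containing `x`: the intersection of a chain of compatible atoms is again compatible,
because a duple `(s, t)` is discriminated by the intersection only if its trace on the finite set
`t` vanishes, and it then vanishes already at some member of the chain. Such a minimal `ψ` is
non-redundant, since any decomposition of `ψ` into compatible atoms has a member containing `x`,
which by minimality is `ψ` itself. Hence every compatible atom, in particular every atom of the
given atomization, is the union of the non-redundant atoms below it, and these atomize `S`.
-/

open Set

theorem Set.exists_inter_eq_empty_of_isChain {α : Type*} {c : Set (Set α)} {t : Set α}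
    (ht : t.Finite) (hc : IsChain (· ⊆ ·) c) (hne : c.Nonempty) (h : ⋂₀ c ∩ t = ∅) :
    ∃ χ ∈ c, χ ∩ t = ∅ := by
  have htraces : ((· ∩ t) '' c).Finite :=
    ht.finite_subsets.subset (image_subset_iff.2 fun _ _ => inter_subset_right)
  obtain ⟨χ₀, hχ₀, hmin⟩ := Finite.exists_minimalFor' (· ∩ t) c htraces hne
  have hbelow : ∀ χ ∈ c, χ₀ ∩ t ⊆ χ := by
    intro χ hχ
    rcases hc.total hχ₀ hχ with hle | hle
    · exact inter_subset_left.trans hle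
    · exact (hmin hχ (inter_subset_inter_left t hle)).trans inter_subset_left
  refine ⟨χ₀, hχ₀, subset_empty_iff.1 ?_⟩
  exact h ▸ subset_inter (subset_sInter hbelow) inter_subset_right

namespace AtomizedSemilattice

variable {C : Type*} (le : Set C → Set C → Prop)

def IsCompatible (χ : Set C) : Prop :=
  χ.Nonempty ∧ ∀ s t : Set C, s.Finite → s.Nonempty → t.Finite → t.Nonempty →
    (χ ∩ s).Nonempty → χ ∩ t = ∅ → ¬ le s t

def IsRedundant (χ : Set C) : Prop :=
  IsCompatible le χ ∧ ∃ S : Set (Set C), (∀ ψ ∈ S, IsCompatible le ψ) ∧ χ ∉ S ∧ χ = ⋃₀ S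

def nonRedundant : Set (Set C) :=
  {χ | IsCompatible le χ ∧ ¬ IsRedundant le χ}

variable {le}

theorem IsCompatible.sInter {c : Set (Set C)} (hc : IsChain (· ⊆ ·) c) (hne : c.Nonempty)
    (hcompat : ∀ χ ∈ c, IsCompatible le χ) (hinter : (⋂₀ c).Nonempty) :
    IsCompatible le (⋂₀ c) := by
  refine ⟨hinter, fun s t hs hsne ht htne ⟨y, hyc, hys⟩ hct hle => ?_⟩
  obtain ⟨χ, hχ, hχt⟩ := exists_inter_eq_empty_of_isChain ht hc hne hct
  exact (hcompat χ hχ).2 s t hs hsne ht htne ⟨y, hyc χ hχ, hys⟩ hχt hle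

theorem not_isRedundant_of_minimal {x : C} {ψ : Set C}
    (hψ : Minimal (fun χ => IsCompatible le χ ∧ x ∈ χ) ψ) : ¬ IsRedundant le ψ := by
  rintro ⟨-, S, hS, hψS, rfl⟩
  obtain ⟨θ, hθS, hxθ⟩ := hψ.prop.2
  have hθψ : θ ⊆ ⋃₀ S := subset_sUnion_of_mem hθS
  exact hψS (hψ.eq_of_subset ⟨hS θ hθS, hxθ⟩ hθψ ▸ hθS)

theorem IsCompatible.exists_mem_nonRedundant {φ : Set C} (hφ : IsCompatible le φ) {x : C}
    (hx : x ∈ φ) : ∃ ψ ∈ nonRedundant le, x ∈ ψ ∧ ψ ⊆ φ := by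
  obtain ⟨ψ, hψφ, hmin⟩ := zorn_superset_nonempty {χ | IsCompatible le χ ∧ x ∈ χ}
    (fun c hc hchain hne =>
      ⟨⋂₀ c, ⟨IsCompatible.sInter hchain hne (fun χ hχ => (hc hχ).1)
          ⟨x, fun χ hχ => (hc hχ).2⟩, fun χ hχ => (hc hχ).2⟩,
        fun _ => sInter_subset_of_mem⟩)
    φ ⟨hφ, hx⟩
  exact ⟨ψ, ⟨hmin.prop.1, not_isRedundant_of_minimal hmin⟩, hmin.prop.2, hψφ⟩

theorem IsCompatible.eq_sUnion_nonRedundant {φ : Set C} (hφ : IsCompatible le φ) :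
    φ = ⋃₀ {ψ | ψ ∈ nonRedundant le ∧ ψ ⊆ φ} := by
  refine Subset.antisymm (fun x hx => ?_) (sUnion_subset fun ψ hψ => hψ.2)
  obtain ⟨ψ, hψ, hxψ, hψφ⟩ := hφ.exists_mem_nonRedundant hx
  exact ⟨ψ, ⟨hψ, hψφ⟩, hxψ⟩

theorem IsCompatible.inter_nonempty_of_le {φ : Set C} (hφ : IsCompatible le φ) {s t : Set C}
    (hs : s.Finite) (hsne : s.Nonempty) (ht : t.Finite) (htne : t.Nonempty) (hle : le s t)
    (hφs : (φ ∩ s).Nonempty) : (φ ∩ t).Nonempty :=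
  nonempty_iff_ne_empty.2 fun hφt => hφ.2 s t hs hsne ht htne hφs hφt hle

theorem isCompatible_of_mem_atomization {A : Set (Set C)}
    (hA : ∀ s t : Set C, s.Finite → s.Nonempty → t.Finite → t.Nonempty →
      (le s t ↔ ∀ φ ∈ A, (φ ∩ s).Nonempty → (φ ∩ t).Nonempty))
    {φ : Set C} (hφA : φ ∈ A) (hφ : φ.Nonempty) : IsCompatible le φ :=
  ⟨hφ, fun s t hs hsne ht htne hφs hφt hle => by
    simpa [hφt] using (hA s t hs hsne ht htne).1 hle φ hφA hφs⟩

theorem nonRedundant_atomizes {A : Set (Set C)}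
    (hA : ∀ s t : Set C, s.Finite → s.Nonempty → t.Finite → t.Nonempty →
      (le s t ↔ ∀ φ ∈ A, (φ ∩ s).Nonempty → (φ ∩ t).Nonempty))
    {s t : Set C} (hs : s.Finite) (hsne : s.Nonempty) (ht : t.Finite) (htne : t.Nonempty) :
    le s t ↔ ∀ φ ∈ nonRedundant le, (φ ∩ s).Nonempty → (φ ∩ t).Nonempty := by
  refine ⟨fun hle φ hφ => hφ.1.inter_nonempty_of_le hs hsne ht htne hle,
    fun hNR => (hA s t hs hsne ht htne).2 fun φ hφA ⟨y, hyφ, hys⟩ => ?_⟩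
  obtain ⟨ψ, hψ, hyψ, hψφ⟩ :=
    (isCompatible_of_mem_atomization hA hφA ⟨y, hyφ⟩).exists_mem_nonRedundant hyφ
  obtain ⟨z, hzψ, hzt⟩ := hNR ψ hψ ⟨y, hyψ, hys⟩
  exact ⟨z, hψφ hzψ, hzt⟩

end AtomizedSemilattice

theorem stmt_19_general {C : Type*} (le : Set C → Set C → Prop)
    (A : Set (Set C))
    (hAatom : ∀ s t : Set C, s.Finite → s.Nonempty → t.Finite → t.Nonempty →
      (le s t ↔ ∀ φ ∈ A, (φ ∩ s).Nonempty → (φ ∩ t).Nonempty)) :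
    let compatible : Set C → Prop := fun χ => χ.Nonempty ∧
      ∀ s t : Set C, s.Finite → s.Nonempty → t.Finite → t.Nonempty →
        (χ ∩ s).Nonempty → χ ∩ t = ∅ → ¬ le s t
    let redundant : Set C → Prop := fun χ => compatible χ ∧
      ∃ S : Set (Set C), (∀ ψ ∈ S, compatible ψ) ∧ χ ∉ S ∧ χ = ⋃₀ S
    let NR : Set (Set C) := {χ | compatible χ ∧ ¬ redundant χ}
    (∀ φ : Set C, redundant φ → ∃ S ⊆ NR, φ = ⋃₀ S) ∧
      ∀ s t : Set C, s.Finite → s.Nonempty → t.Finite → t.Nonempty →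
        (le s t ↔ ∀ φ ∈ NR, (φ ∩ s).Nonempty → (φ ∩ t).Nonempty) :=
  ⟨fun φ (hφ : AtomizedSemilattice.IsRedundant le φ) =>
      ⟨_, fun _ hψ => hψ.1, hφ.1.eq_sUnion_nonRedundant⟩,
    fun _ _ hs hsne ht htne => AtomizedSemilattice.nonRedundant_atomizes hAatom hs hsne ht htne⟩

/-- In a finitely generated semilattice `S` over an infinite set of constants
`C` (terms: the finite nonempty subsets of `C`, order `le`, atomized by some
atomization `A`), every atom redundant with `S` is a union of atoms
non-redundant with `S`; equivalently, the non-redundant atoms atomize `S`. -/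
theorem stmt_19 {C : Type*} [Infinite C] (le : Set C → Set C → Prop)
    (A : Set (Set C)) (hAne : ∀ φ ∈ A, φ.Nonempty)
    (hAatom : ∀ s t : Set C, s.Finite → s.Nonempty → t.Finite → t.Nonempty →
      (le s t ↔ ∀ φ ∈ A, (φ ∩ s).Nonempty → (φ ∩ t).Nonempty)) :
    let compatible : Set C → Prop := fun χ => χ.Nonempty ∧
      ∀ s t : Set C, s.Finite → s.Nonempty → t.Finite → t.Nonempty →
        (χ ∩ s).Nonempty → χ ∩ t = ∅ → ¬ le s t
    let redundant : Set C → Prop := fun χ => compatible χ ∧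
      ∃ S : Set (Set C), (∀ ψ ∈ S, compatible ψ) ∧ χ ∉ S ∧ χ = ⋃₀ S
    let NR : Set (Set C) := {χ | compatible χ ∧ ¬ redundant χ}
    (∀ φ : Set C, redundant φ → ∃ S ⊆ NR, φ = ⋃₀ S) ∧
      ∀ s t : Set C, s.Finite → s.Nonempty → t.Finite → t.Nonempty →
        (le s t ↔ ∀ φ ∈ NR, (φ ∩ s).Nonempty → (φ ∩ t).Nonempty) :=
  stmt_19_general le A hAatom
end
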